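/- Every finite nonempty simple graph G without isolated vertices satisfies χ'_CF(G) ≤ 3⌈log₂ χ(G)⌉ + 1, where χ(G) denotes the chromatic number of G. -/

import Mathlib

open SimpleGraph

/-- An edge `e` is *satisfied* by the colouring `c` of (the edges of) the graph `H` if some
colour is assigned by `c` to exactly one edge of `H` incident to an endpoint of `e`. -/
def CFSatisfies {V : Type*} {k : ℕ} (H : SimpleGraph V) (c : Sym2 V → Fin k) (e : Sym2 V) :
    Prop :=
  ∃ col : Fin k, ∃! f : Sym2 V, f ∈ H.edgeSet ∧ (∃ x ∈ e, x ∈ f) ∧ c f = col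

/-- The conflict-free chromatic index `χ'_CF(G)`: the least `k` such that `G` admits an edge
colouring with `k` colours in which every edge of `G` is satisfied. -/
noncomputable def cfChromIndex {V : Type*} (G : SimpleGraph V) : ℕ :=
  sInf {k | ∃ c : Sym2 V → Fin k, ∀ e ∈ G.edgeSet, CFSatisfies G c e}

/-- The parameter `χ'_sCF(G)`: the least `k` for which some subgraph `H` of `G` admits an edge
colouring with `k` colours such that every edge of `G` is satisfied. -/
noncomputable def scfChromIndex {V : Type*} (G : SimpleGraph V) : ℕ :=
  sInf {k | ∃ H : SimpleGraph V, H ≤ G ∧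
    ∃ c : Sym2 V → Fin k, ∀ e ∈ G.edgeSet, CFSatisfies H c e}

open Finset

/-!
Properly colour `G` with `2 ^ t` colours, `t = ⌈log₂ χ(G)⌉`, and give each edge the level
`j < t` of the highest bit in which the colours of its ends differ. The edges of level `j` form
a bipartite graph, split by bit `j`. In a bipartite graph, attach every vertex of one side to a
neighbour; among such choices take one with the fewest one-leaf stars. Then the stars can be
labelled with 3 colours so that every edge of the bipartite graph sees some label exactly once
on the star edges at its ends. Disjoint triples of colours for the levels and one extra colour
for all remaining edges give a conflict-free colouring with `3t + 1` colours.
-/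

theorem Nat.testBit_log2_xor_ne {m n : ℕ} (h : m ≠ n) :
    m.testBit (m ^^^ n).log2 ≠ n.testBit (m ^^^ n).log2 := by
  have htop := Nat.testBit_log2 (mt xor_eq_zero_iff.1 h)
  rw [Nat.testBit_xor] at htop
  intro heq
  simp [heq] at htop

theorem Nat.log2_xor_lt {m n t : ℕ} (hm : m < 2 ^ t) (hn : n < 2 ^ t) (h : m ≠ n) :
    (m ^^^ n).log2 < t :=
  (Nat.log2_lt (mt xor_eq_zero_iff.1 h)).2 (Nat.xor_lt_two_pow hm hn)

/-- Ranks `0, 1, 2, …` of the leaves of a star with `s` leaves get labels `1, 2` if `s = 2`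
and `0, 1, 2, 2, …` otherwise: labels `0` and `1` occur once in larger stars, and a two-leaf
star avoids `0`, the label of a one-leaf star. -/
def starPattern (s i : ℕ) : Fin 3 :=
  if s = 2 then ⟨i % 2 + 1, by omega⟩ else ⟨min i 2, by omega⟩

lemma starPattern_val (s i : ℕ) :
    (starPattern s i : ℕ) = if s = 2 then i % 2 + 1 else min i 2 := by
  unfold starPattern; split_ifs <;> rfl

lemma starPattern_two_ne_zero (i : ℕ) : starPattern 2 i ≠ 0 := by
  simp [Fin.ext_iff, starPattern_val]

lemma exists_unique_starPattern_ne {s : ℕ} (hs : 0 < s) {γ : Fin 3} (hγ : s = 1 → γ ≠ 0) :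
    ∃ x ≠ γ, ∃! i : Fin s, starPattern s i = x := by
  rcases (by omega : s = 1 ∨ s = 2 ∨ 3 ≤ s) with rfl | rfl | hs3
  · exact ⟨0, (hγ rfl).symm, 0, by decide, fun i _ => Subsingleton.elim _ _⟩
  · by_cases hγ1 : γ = 1
    · exact ⟨2, by rw [hγ1]; decide, 1, by decide, by decide⟩
    · exact ⟨1, Ne.symm hγ1, 0, by decide, by decide⟩
  · have hrank : ∀ (i : Fin s) (x : Fin 3), x ≠ 2 → (starPattern s i = x ↔ (i : ℕ) = x) := by
      intro i x hx
      rw [Fin.ext_iff, starPattern_val, if_neg (by omega)]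
      have := Fin.val_ne_iff.2 hx
      omega
    obtain ⟨x, hxγ, hx2⟩ : ∃ x : Fin 3, x ≠ γ ∧ x ≠ 2 := by fin_cases γ <;> decide
    exact ⟨x, hxγ, ⟨x, by omega⟩, (hrank _ x hx2).2 rfl,
      fun i hi => Fin.ext ((hrank i x hx2).1 hi)⟩

section StarLabel

variable {V : Type*} [DecidableEq V]

noncomputable def starLabel (S : Finset V) (y : V) : Fin 3 :=
  if h : y ∈ S then starPattern #S (S.equivFin ⟨y, h⟩) else 0

lemma starLabel_of_mem {S : Finset V} {y : V} (h : y ∈ S) :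
    starLabel S y = starPattern #S (S.equivFin ⟨y, h⟩) :=
  dif_pos h

lemma starLabel_of_notMem {S : Finset V} {y : V} (h : y ∉ S) : starLabel S y = 0 :=
  dif_neg h

lemma starLabel_ne_zero_of_card_eq_two {S : Finset V} {y : V} (hS : #S = 2) (hy : y ∈ S) :
    starLabel S y ≠ 0 := by
  rw [starLabel_of_mem hy]
  generalize (S.equivFin ⟨y, hy⟩ : ℕ) = i
  rw [hS]
  exact starPattern_two_ne_zero i

lemma exists_unique_starLabel_ne {S : Finset V} (hS : S.Nonempty) {γ : Fin 3}
    (hγ : #S = 1 → γ ≠ 0) : ∃ x ≠ γ, ∃! y, y ∈ S ∧ starLabel S y = x := by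
  obtain ⟨x, hxγ, i, hi, hunique⟩ := exists_unique_starPattern_ne hS.card_pos hγ
  refine ⟨x, hxγ, S.equivFin.symm i, ⟨(S.equivFin.symm i).2, ?_⟩, ?_⟩
  · rw [starLabel_of_mem (S.equivFin.symm i).2, Subtype.coe_eta, Equiv.apply_symm_apply, hi]
  · rintro y ⟨hy, hyx⟩
    rw [starLabel_of_mem hy] at hyx
    rw [← hunique _ hyx, Equiv.symm_apply_apply]

end StarLabel

section NeighborChoice

variable {V : Type*}

def IsNeighborChoice (B : SimpleGraph V) (g : V → V) : Prop :=
  ∀ ⦃y x⦄, B.Adj y x → B.Adj y (g y)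

lemma exists_isNeighborChoice (B : SimpleGraph V) : ∃ g, IsNeighborChoice B g := by
  have : ∀ y, ∃ x, ∀ x', B.Adj y x' → B.Adj y x := fun y => by
    by_cases h : ∃ x', B.Adj y x'
    · exact ⟨h.choose, fun _ _ => h.choose_spec⟩
    · exact ⟨y, fun x' hx' => (h ⟨x', hx'⟩).elim⟩
  choose g hg using this
  exact ⟨g, fun y x => hg y x⟩

lemma IsNeighborChoice.update [DecidableEq V] {B : SimpleGraph V} {g : V → V}
    (hg : IsNeighborChoice B g) {v u : V} (hvu : B.Adj v u) :
    IsNeighborChoice B (Function.update g v u) := by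
  intro y x hyx
  by_cases hy : y = v
  · subst hy; simpa using hvu
  · simpa [hy] using hg hyx

end NeighborChoice

section StarForest

variable {V : Type*} [Fintype V] [DecidableEq V] {B : SimpleGraph V} [DecidableRel B.Adj]

variable (C : B.Coloring Bool) (g : V → V)

/-- Vertices coloured `false` are the leaves; `g` attaches each to its centre. -/
def leafStar (x : V) : Finset V := {y | C y = false ∧ B.Adj y x ∧ g y = x}

def starForest : SimpleGraph V := fromRel fun y x => y ∈ leafStar C g x

/-- `starLabel` vanishes off a star, so an edge of the forest gets the label of its leaf. -/
noncomputable def starForestColoring : Sym2 V → Fin 3 :=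
  Sym2.lift ⟨fun a b => starLabel (leafStar C g b) a + starLabel (leafStar C g a) b,
    fun _ _ => add_comm _ _⟩

def singletonStars : Finset V := {x | #(leafStar C g x) = 1}

variable {C g}

lemma mem_leafStar {x y : V} : y ∈ leafStar C g x ↔ C y = false ∧ B.Adj y x ∧ g y = x := by
  simp [leafStar]

lemma color_eq_true_of_mem_leafStar {x y : V} (h : y ∈ leafStar C g x) : C x = true := by
  obtain ⟨hy, hyx, -⟩ := mem_leafStar.1 h
  simpa [hy] using (C.valid hyx).symm

lemma starForest_le : starForest C g ≤ B := by
  intro a b hab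
  rcases ((fromRel_adj _ _ _).1 hab).2 with h | h
  · exact (mem_leafStar.1 h).2.1
  · exact (mem_leafStar.1 h).2.1.symm

lemma starForestColoring_mk {x y : V} (h : y ∈ leafStar C g x) :
    starForestColoring C g s(y, x) = starLabel (leafStar C g x) y := by
  have hx : x ∉ leafStar C g y := fun hx => by
    simpa [(mem_leafStar.1 hx).1] using color_eq_true_of_mem_leafStar h
  simp only [starForestColoring, Sym2.lift_mk]
  rw [starLabel_of_notMem hx, add_zero]

lemma leafStar_update {u v : V} (hv : C v = false) (hvu : B.Adj v u) (x : V) :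
    leafStar C (Function.update g v u) x =
      if x = u then insert v (leafStar C g x) else (leafStar C g x).erase v := by
  ext y
  by_cases hy : y = v
  · subst hy
    split_ifs with hx
    · simp [mem_leafStar, hv, hvu, hx]
    · simp [mem_leafStar, Ne.symm hx]
  · split_ifs <;> simp [mem_leafStar, hy]

lemma exists_eq_of_mem_edgeSet_starForest {f : Sym2 V} (hf : f ∈ (starForest C g).edgeSet) :
    ∃ y, y ∈ leafStar C g (g y) ∧ f = s(y, g y) := by
  induction f using Sym2.ind with
  | _ a b =>
  rcases (hf : (starForest C g).Adj a b).2 with h | h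
  · have hab : g a = b := (mem_leafStar.1 h).2.2
    exact ⟨a, hab ▸ h, by rw [hab]⟩
  · have hba : g b = a := (mem_leafStar.1 h).2.2
    exact ⟨b, hba ▸ h, by rw [hba, Sym2.eq_swap]⟩

lemma card_leafStar_eq_two_of_isMin (hg : IsNeighborChoice B g)
    (hmin : ∀ g', IsNeighborChoice B g' → #(singletonStars C g) ≤ #(singletonStars C g'))
    {u v : V} (huv : B.Adj u v) (hv : C v = false) (hvu : g v ≠ u)
    (hu : #(leafStar C g u) = 1) : #(leafStar C g (g v)) = 2 := by
  by_contra hw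
  have hv_notMem : v ∉ leafStar C g u := by simp [mem_leafStar, hvu]
  have hu_mem : u ∈ singletonStars C g := by simp [singletonStars, hu]
  have hsub : singletonStars C (Function.update g v u) ⊆ (singletonStars C g).erase u := by
    intro x hx
    simp only [singletonStars, mem_filter, mem_univ, true_and, mem_erase] at hx ⊢
    rw [leafStar_update hv huv.symm] at hx
    split_ifs at hx with hxu
    · subst hxu
      rw [card_insert_of_notMem hv_notMem, hu] at hx
      omega
    · refine ⟨hxu, ?_⟩
      by_cases hvx : v ∈ leafStar C g x
      · rw [card_erase_of_mem hvx] at hx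
        rw [← (mem_leafStar.1 hvx).2.2] at hx hvx
        exact absurd (by have := card_pos.2 ⟨v, hvx⟩; omega) hw
      · rwa [erase_eq_of_notMem hvx] at hx
  have hle := card_le_card hsub
  rw [card_erase_of_mem hu_mem] at hle
  have := hmin _ (hg.update huv.symm)
  have := card_pos.2 ⟨u, hu_mem⟩
  omega

lemma exists_unique_starLabel_of_isMin (hg : IsNeighborChoice B g)
    (hmin : ∀ g', IsNeighborChoice B g' → #(singletonStars C g) ≤ #(singletonStars C g'))
    {u v : V} (huv : B.Adj u v) (hv : C v = false) :
    ∃ x, ∃! y, (y ∈ leafStar C g u ∨ y = v) ∧ starLabel (leafStar C g (g y)) y = x := by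
  have hv_mem : v ∈ leafStar C g (g v) := mem_leafStar.2 ⟨hv, hg huv.symm, rfl⟩
  have hlabel : ∀ y ∈ leafStar C g u,
      starLabel (leafStar C g (g y)) y = starLabel (leafStar C g u) y := fun y hy => by
    rw [(mem_leafStar.1 hy).2.2]
  by_cases hvu : g v = u
  · rw [hvu] at hv_mem
    obtain ⟨x, -, y₀, ⟨hy₀, hx⟩, hunique⟩ :=
      exists_unique_starLabel_ne ⟨v, hv_mem⟩ (γ := 1) (fun _ => by decide)
    refine ⟨x, y₀, ⟨Or.inl hy₀, (hlabel y₀ hy₀).trans hx⟩, ?_⟩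
    rintro y ⟨hy | rfl, hyx⟩
    · exact hunique y ⟨hy, (hlabel y hy).symm.trans hyx⟩
    · exact hunique y ⟨hv_mem, (hlabel y hv_mem).symm.trans hyx⟩
  rcases (leafStar C g u).eq_empty_or_nonempty with hempty | hne
  · refine ⟨_, v, ⟨Or.inr rfl, rfl⟩, ?_⟩
    rintro y ⟨hy | rfl, -⟩
    · simp [hempty] at hy
    · rfl
  -- a singleton star at `u` must not reuse the label of `v`; minimality guarantees this
  have hγ : #(leafStar C g u) = 1 → starLabel (leafStar C g (g v)) v ≠ 0 := fun hu =>
    starLabel_ne_zero_of_card_eq_two (card_leafStar_eq_two_of_isMin hg hmin huv hv hvu hu) hv_mem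
  obtain ⟨x, hxγ, y₀, ⟨hy₀, hx⟩, hunique⟩ := exists_unique_starLabel_ne hne hγ
  refine ⟨x, y₀, ⟨Or.inl hy₀, (hlabel y₀ hy₀).trans hx⟩, ?_⟩
  rintro y ⟨hy | rfl, hyx⟩
  · exact hunique y ⟨hy, (hlabel y hy).symm.trans hyx⟩
  · exact absurd hyx.symm hxγ

lemma cfSatisfies_starForest (hg : IsNeighborChoice B g) {u v : V} (huv : B.Adj u v)
    (hv : C v = false)
    (h : ∃ x, ∃! y, (y ∈ leafStar C g u ∨ y = v) ∧ starLabel (leafStar C g (g y)) y = x) :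
    CFSatisfies (starForest C g) (starForestColoring C g) s(u, v) := by
  obtain ⟨x, y₀, ⟨hy₀, hx⟩, hunique⟩ := h
  have hu : C u = true := by simpa [hv] using C.valid huv
  have hy₀_mem : y₀ ∈ leafStar C g (g y₀) := by
    rcases hy₀ with hy₀ | rfl
    · rwa [(mem_leafStar.1 hy₀).2.2]
    · exact mem_leafStar.2 ⟨hv, hg huv.symm, rfl⟩
  refine ⟨x, s(y₀, g y₀), ⟨?_, ?_, by rwa [starForestColoring_mk hy₀_mem]⟩, ?_⟩
  · exact (⟨(mem_leafStar.1 hy₀_mem).2.1.ne, Or.inl hy₀_mem⟩ : (starForest C g).Adj y₀ (g y₀))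
  · rcases hy₀ with hy₀ | rfl
    · exact ⟨u, by simp, by simp [(mem_leafStar.1 hy₀).2.2]⟩
    · exact ⟨y₀, by simp, by simp⟩
  · rintro f ⟨hf, ⟨z, hzuv, hzf⟩, hfx⟩
    obtain ⟨y, hy, rfl⟩ := exists_eq_of_mem_edgeSet_starForest hf
    rw [starForestColoring_mk hy] at hfx
    have hleaf : y ∈ leafStar C g u ∨ y = v := by
      have hy_leaf := (mem_leafStar.1 hy).1
      have hgy_centre := color_eq_true_of_mem_leafStar hy
      rcases Sym2.mem_iff.1 hzuv with rfl | rfl <;> rcases Sym2.mem_iff.1 hzf with h | h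
      · simp_all
      · exact Or.inl (h ▸ hy)
      · exact Or.inr h.symm
      · simp_all
    rw [hunique y ⟨hleaf, hfx⟩]

end StarForest

theorem exists_cfSatisfies_of_coloring_bool {V : Type*} [Finite V] {B : SimpleGraph V}
    (C : B.Coloring Bool) : ∃ H ≤ B, ∃ c : Sym2 V → Fin 3, ∀ e ∈ B.edgeSet, CFSatisfies H c e := by
  classical
  have := Fintype.ofFinite V
  obtain ⟨g, hg, hmin⟩ := Set.exists_min_image {g | IsNeighborChoice B g}
    (fun g => #(singletonStars C g)) (Set.toFinite _) (exists_isNeighborChoice B)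
  refine ⟨starForest C g, starForest_le, starForestColoring C g, ?_⟩
  refine Sym2.ind fun u v huv => ?_
  cases hv : C v
  · exact cfSatisfies_starForest hg huv hv (exists_unique_starLabel_of_isMin hg hmin huv hv)
  · have hu : C u = false := by simpa [hv] using C.valid huv
    rw [Sym2.eq_swap]
    exact cfSatisfies_starForest hg huv.symm hu
      (exists_unique_starLabel_of_isMin hg hmin huv.symm hu)

theorem exists_cfSatisfies_of_levels {V : Type*} (G : SimpleGraph V) {k t : ℕ}
    (level : Sym2 V → ℕ) (hlevel : ∀ e ∈ G.edgeSet, level e < t)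
    (H : ℕ → SimpleGraph V) (hHG : ∀ j, H j ≤ G) (hHlevel : ∀ j, ∀ e ∈ (H j).edgeSet, level e = j)
    (c : ℕ → Sym2 V → Fin k) (hc : ∀ e ∈ G.edgeSet, CFSatisfies (H (level e)) (c (level e)) e) :
    ∃ c' : Sym2 V → Fin (k * t + 1), ∀ e ∈ G.edgeSet, CFSatisfies G c' e := by
  classical
  have hlt : ∀ {e}, e ∈ (H (level e)).edgeSet → level e < t :=
    fun he => hlevel _ (edgeSet_mono (hHG _) he)
  -- colour `0` is shared by all edges outside the `H j`; level `j` gets its own `k` colours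
  let c' : Sym2 V → Fin (k * t + 1) := fun e =>
    if he : e ∈ (H (level e)).edgeSet then (finProdFinEquiv (c (level e) e, ⟨level e, hlt he⟩)).succ
    else 0
  have hc' : ∀ f x j (hj : j < t),
      c' f = (finProdFinEquiv (x, ⟨j, hj⟩)).succ ↔ f ∈ (H j).edgeSet ∧ c j f = x := by
    intro f x j hj
    constructor
    · intro hf
      simp only [c'] at hf
      split_ifs at hf with hfH
      · simp only [Fin.succ_inj, EmbeddingLike.apply_eq_iff_eq, Prod.mk.injEq, Fin.mk.injEq] at hf
        obtain ⟨hx, rfl⟩ := hf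
        exact ⟨hfH, hx⟩
      · exact absurd hf.symm (Fin.succ_ne_zero _)
    · rintro ⟨hf, rfl⟩
      obtain rfl := hHlevel j f hf
      simp [c', hf]
  refine ⟨c', fun e he => ?_⟩
  obtain ⟨x, f, ⟨hf, hfe, hfx⟩, hunique⟩ := hc e he
  refine ⟨(finProdFinEquiv (x, ⟨level e, hlevel e he⟩)).succ, f,
    ⟨edgeSet_mono (hHG _) hf, hfe, (hc' _ _ _ _).2 ⟨hf, hfx⟩⟩, ?_⟩
  rintro f' ⟨-, hf'e, hf'x⟩
  obtain ⟨hf', hf'x⟩ := (hc' _ _ _ _).1 hf'x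
  exact hunique f' ⟨hf', hf'e, hf'x⟩

theorem exists_cfSatisfies_of_coloring_two_pow {V : Type*} [Finite V] {G : SimpleGraph V}
    {t : ℕ} (φ : G.Coloring (Fin (2 ^ t))) :
    ∃ c : Sym2 V → Fin (3 * t + 1), ∀ e ∈ G.edgeSet, CFSatisfies G c e := by
  let level : Sym2 V → ℕ :=
    Sym2.lift ⟨fun u v => ((φ u : ℕ) ^^^ φ v).log2,
      fun u v => congrArg Nat.log2 (Nat.xor_comm _ _)⟩
  let B : ℕ → SimpleGraph V := fun j => G ⊓ fromEdgeSet {e | level e = j}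
  have hB : ∀ j, ∀ ⦃u v⦄, (B j).Adj u v → G.Adj u v ∧ ((φ u : ℕ) ^^^ φ v).log2 = j :=
    fun j u v huv => ⟨huv.1, huv.2.1⟩
  let bit : ∀ j, (B j).Coloring Bool := fun j =>
    Coloring.mk (fun v => (φ v : ℕ).testBit j) fun {u v} huv => by
      obtain ⟨hG, rfl⟩ := hB j huv
      exact Nat.testBit_log2_xor_ne (Fin.val_ne_of_ne (φ.valid hG))
  choose H hHB c hc using fun j => exists_cfSatisfies_of_coloring_bool (bit j)
  refine exists_cfSatisfies_of_levels G level ?_ H (fun j => (hHB j).trans inf_le_left) ?_ c ?_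
  · rintro ⟨u, v⟩ huv
    exact Nat.log2_xor_lt (φ u).isLt (φ v).isLt (Fin.val_ne_of_ne (φ.valid huv))
  · rintro j ⟨u, v⟩ he
    exact (hB j (edgeSet_mono (hHB j) he)).2
  · rintro ⟨u, v⟩ he
    exact hc _ _ ⟨he, rfl, G.ne_of_adj he⟩

theorem cfChromIndex_le_of_colorable {V : Type*} [Finite V] {G : SimpleGraph V} {t : ℕ}
    (h : G.Colorable (2 ^ t)) : cfChromIndex G ≤ 3 * t + 1 :=
  let ⟨φ⟩ := h
  Nat.sInf_le (exists_cfSatisfies_of_coloring_two_pow φ)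

theorem cfChromIndex_le_three_clog_chromaticNumber_add_one_general {V : Type*} [Fintype V]
    (G : SimpleGraph V) :
    cfChromIndex G ≤ 3 * Nat.clog 2 G.chromaticNumber.toNat + 1 :=
  cfChromIndex_le_of_colorable
    (G.colorable_chromaticNumber_of_fintype.mono (Nat.le_pow_clog one_lt_two _))

/-- Every finite nonempty simple graph without isolated vertices satisfies
`χ'_CF(G) ≤ 3⌈log₂ χ(G)⌉ + 1`. -/
theorem cfChromIndex_le_three_clog_chromaticNumber_add_one {V : Type*} [Fintype V] [Nonempty V]
    (G : SimpleGraph V) (hNoIso : ∀ v : V, ∃ w : V, G.Adj v w) :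
    cfChromIndex G ≤ 3 * Nat.clog 2 G.chromaticNumber.toNat + 1 :=
  cfChromIndex_le_three_clog_chromaticNumber_add_one_general G
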